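/- For positive integers r, n, k, the value M_r(1;n,k) = (1/k^r) Σ_{d|k} c_r(n,k/d) equals 1 if k^r divides n, and 0 otherwise. -/

import Mathlib

/-!
Every `M ∈ [1, k^r]` is uniquely `g^r * m` with `g ∣ k`, `m ∈ [1, (k/g)^r]` and
`(m, (k/g)^r)_r = 1`, namely with `g^r = (M, k^r)_r`. Hence `∑_{g ∣ k} c_r(n, k/g)` is the
complete exponential sum `∑_{M=1}^{k^r} e^{2πiMn/k^r}`, which is `k^r` or `0` according as `k^r ∣ n`.
-/

open Finset

/-- Cohen's `r`-Ramanujan sum. -/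
noncomputable def ramcr (r n k : ℕ) : ℂ :=
  ∑ m ∈ (Finset.Icc 1 (k ^ r)).filter
      (fun m => ∀ d ∈ Finset.Icc 2 (k ^ r), ¬(d ^ r ∣ m ∧ d ^ r ∣ k ^ r)),
    Complex.exp (2 * Real.pi * Complex.I * m * n / (k ^ r))

/-- `M_r(t;n,k) = (1/k^r) Σ_{d|k} c_r(n,k/d) t^d`. -/
noncomputable def neckr (r : ℕ) (t : ℂ) (n k : ℕ) : ℂ :=
  (1 / (k : ℂ) ^ r) * ∑ d ∈ k.divisors, ramcr r n (k / d) * t ^ d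

/-- For `e ≠ 0`, `RCoprime r e m` is the paper's `(m, e^r)_r = 1`. -/
def RCoprime (r e m : ℕ) : Prop := ∀ d ∈ e.divisors, d ^ r ∣ m → d = 1

instance (r e : ℕ) : DecidablePred (RCoprime r e) :=
  fun _ => inferInstanceAs (Decidable (∀ d ∈ e.divisors, _))

/-- For `r, k ≠ 0`, `(M, k^r)_r = rgcd r k M ^ r`. -/
def rgcd (r k M : ℕ) : ℕ := Nat.findGreatest (fun d => d ∣ k ∧ d ^ r ∣ M) k

section rgcd

variable {r k M : ℕ}

lemma rgcd_spec (hk : k ≠ 0) : rgcd r k M ∣ k ∧ rgcd r k M ^ r ∣ M :=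
  Nat.findGreatest_spec (P := fun d => d ∣ k ∧ d ^ r ∣ M) (Nat.one_le_iff_ne_zero.2 hk)
    ⟨one_dvd k, by simp⟩

lemma rgcd_dvd (hk : k ≠ 0) : rgcd r k M ∣ k := (rgcd_spec hk).1

lemma rgcd_pow_dvd (hk : k ≠ 0) : rgcd r k M ^ r ∣ M := (rgcd_spec hk).2

lemma rgcd_ne_zero (hk : k ≠ 0) : rgcd r k M ≠ 0 := ne_zero_of_dvd_ne_zero hk (rgcd_dvd hk)

lemma le_rgcd {d : ℕ} (hk : k ≠ 0) (hd : d ∣ k) (hdM : d ^ r ∣ M) : d ≤ rgcd r k M :=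
  Nat.le_findGreatest (Nat.le_of_dvd (Nat.pos_of_ne_zero hk) hd) ⟨hd, hdM⟩

lemma rCoprime_div_rgcd (hk : k ≠ 0) : RCoprime r (k / rgcd r k M) (M / rgcd r k M ^ r) := by
  set g := rgcd r k M
  intro d hd hdM
  rw [Nat.mem_divisors] at hd
  have hgdk : g * d ∣ k := Nat.mul_dvd_of_dvd_div (rgcd_dvd hk) hd.1
  have hgdM : (g * d) ^ r ∣ M := by
    rw [mul_pow]
    exact Nat.mul_dvd_of_dvd_div (rgcd_pow_dvd hk) hdM
  have hle : g * d ≤ g * 1 := by simpa using le_rgcd hk hgdk hgdM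
  have hd1 : d ≤ 1 := Nat.le_of_mul_le_mul_left hle (Nat.pos_of_ne_zero (rgcd_ne_zero hk))
  have hd0 : d ≠ 0 := ne_zero_of_dvd_ne_zero hd.2 hd.1
  omega

lemma rgcd_pow_mul {g m : ℕ} (hk : k ≠ 0) (hg : g ∣ k) (hm : RCoprime r (k / g) m) :
    rgcd r k (g ^ r * m) = g := by
  set d := rgcd r k (g ^ r * m)
  have hg0 : 0 < g := Nat.pos_of_ne_zero (ne_zero_of_dvd_ne_zero hk hg)
  refine le_antisymm ?_ (le_rgcd hk hg (dvd_mul_right _ _))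
  -- `lcm d g = g * u` with `u ∣ k / g` and `u ^ r ∣ m`, so `u = 1` and `d ∣ g`.
  obtain ⟨u, hu⟩ : g ∣ Nat.lcm d g := Nat.dvd_lcm_right d g
  have hlk : g * u ∣ k := hu ▸ Nat.lcm_dvd (rgcd_dvd hk) hg
  have hlM : g ^ r * u ^ r ∣ g ^ r * m := by
    rw [← mul_pow, ← hu, ← Nat.pow_lcm_pow]
    exact Nat.lcm_dvd (rgcd_pow_dvd hk) (dvd_mul_right _ _)
  have hkg : k / g ≠ 0 := (Nat.div_pos (Nat.le_of_dvd (Nat.pos_of_ne_zero hk) hg) hg0).ne'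
  have hu1 : u = 1 :=
    hm u (Nat.mem_divisors.2 ⟨Nat.dvd_div_of_mul_dvd hlk, hkg⟩)
      ((Nat.mul_dvd_mul_iff_left (pow_pos hg0 r)).1 hlM)
  have hdg : d ∣ g := by
    have := Nat.dvd_lcm_left d g
    rwa [hu, hu1, mul_one] at this
  exact Nat.le_of_dvd hg0 hdg

theorem sum_divisors_sum_rCoprime {β : Type*} [AddCommMonoid β] (hk : k ≠ 0) (f : ℕ → β) :
    ∑ g ∈ k.divisors, ∑ m ∈ (Icc 1 ((k / g) ^ r)).filter (RCoprime r (k / g)),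
      f (g ^ r * m) = ∑ M ∈ Icc 1 (k ^ r), f M := by
  rw [sum_sigma']
  refine sum_nbij' (fun p => p.1 ^ r * p.2) (fun M => ⟨rgcd r k M, M / rgcd r k M ^ r⟩)
    ?_ ?_ ?_ ?_ fun _ _ => rfl
  · rintro ⟨g, m⟩ hp
    simp only [mem_sigma, Nat.mem_divisors, mem_filter, mem_Icc] at hp ⊢
    obtain ⟨⟨hg, -⟩, ⟨hm1, hmk⟩, -⟩ := hp
    have hgr : 0 < g ^ r := pow_pos (Nat.pos_of_ne_zero (ne_zero_of_dvd_ne_zero hk hg)) r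
    refine ⟨Nat.mul_pos hgr hm1, ?_⟩
    calc g ^ r * m ≤ g ^ r * (k / g) ^ r := Nat.mul_le_mul_left _ hmk
      _ = k ^ r := by rw [← mul_pow, Nat.mul_div_cancel' hg]
  · intro M hM
    rw [mem_Icc] at hM
    simp only [mem_sigma, Nat.mem_divisors, mem_filter, mem_Icc]
    have hgr : 0 < rgcd r k M ^ r := pow_pos (Nat.pos_of_ne_zero (rgcd_ne_zero hk)) r
    refine ⟨⟨rgcd_dvd hk, hk⟩,
      ⟨Nat.div_pos (Nat.le_of_dvd hM.1 (rgcd_pow_dvd hk)) hgr, ?_⟩, rCoprime_div_rgcd hk⟩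
    refine Nat.div_le_of_le_mul ?_
    rw [← mul_pow, Nat.mul_div_cancel' (rgcd_dvd hk)]
    exact hM.2
  · rintro ⟨g, m⟩ hp
    simp only [mem_sigma, Nat.mem_divisors, mem_filter] at hp
    obtain ⟨⟨hg, -⟩, -, hm⟩ := hp
    have hgr : 0 < g ^ r := pow_pos (Nat.pos_of_ne_zero (ne_zero_of_dvd_ne_zero hk hg)) r
    simp only [rgcd_pow_mul hk hg hm, Nat.mul_div_cancel_left m hgr]
  · intro M _
    exact Nat.mul_div_cancel' (rgcd_pow_dvd hk)

end rgcd

lemma ramcr_eq_sum_rCoprime {r : ℕ} (hr : r ≠ 0) (n e : ℕ) :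
    ramcr r n e = ∑ m ∈ (Icc 1 (e ^ r)).filter (RCoprime r e),
      Complex.exp (2 * Real.pi * Complex.I * m * n / (e ^ r)) := by
  refine sum_congr (filter_congr fun m hm => ?_) fun _ _ => rfl
  have he : e ≠ 0 := by
    rintro rfl
    simp [zero_pow hr] at hm
  constructor
  · intro h d hd hdm
    rw [Nat.mem_divisors] at hd
    by_contra hd1
    have hd2 : 2 ≤ d := by
      have := ne_zero_of_dvd_ne_zero he hd.1
      omega
    have hde : d ≤ e ^ r :=
      (Nat.le_of_dvd (Nat.pos_of_ne_zero he) hd.1).trans (Nat.le_self_pow hr e)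
    exact h d (mem_Icc.2 ⟨hd2, hde⟩) ⟨hdm, pow_dvd_pow_of_dvd hd.1 r⟩
  · rintro h d hd ⟨hdm, hde⟩
    have := h d (Nat.mem_divisors.2 ⟨(Nat.pow_dvd_pow_iff hr).1 hde, he⟩) hdm
    rw [mem_Icc] at hd
    omega

lemma sum_Icc_exp_eq_ite (q n : ℕ) (hq : q ≠ 0) :
    ∑ M ∈ Icc 1 q, Complex.exp (2 * Real.pi * Complex.I * M * n / q) =
      if q ∣ n then (q : ℂ) else 0 := by
  set ω := Complex.exp (2 * Real.pi * Complex.I / q)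
  have hω : IsPrimitiveRoot ω q := Complex.isPrimitiveRoot_exp q hq
  have hterm (M : ℕ) : Complex.exp (2 * Real.pi * Complex.I * M * n / q) = (ω ^ n) ^ M := by
    rw [← pow_mul, ← Complex.exp_nat_mul]
    congr 1
    push_cast
    ring
  have hshift : ∑ M ∈ Icc 1 q, (ω ^ n) ^ M = ω ^ n * ∑ M ∈ range q, (ω ^ n) ^ M := by
    rw [mul_sum, ← Ico_add_one_right_eq_Icc, sum_Ico_eq_sum_range]
    simp [pow_succ', add_comm]
  simp only [hterm, hshift]
  split_ifs with hdvd
  · simp [(hω.pow_eq_one_iff_dvd n).2 hdvd]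
  · have hne : ω ^ n ≠ 1 := mt (hω.pow_eq_one_iff_dvd n).1 hdvd
    rw [geom_sum_eq hne, pow_right_comm, hω.pow_eq_one, one_pow, sub_self, zero_div, mul_zero]

lemma sum_divisors_ramcr_div {r k : ℕ} (hr : r ≠ 0) (hk : k ≠ 0) (n : ℕ) :
    ∑ g ∈ k.divisors, ramcr r n (k / g) = if k ^ r ∣ n then (k : ℂ) ^ r else 0 := by
  have hterm : ∀ g ∈ k.divisors, ∀ m : ℕ,
      Complex.exp (2 * Real.pi * Complex.I * m * n / ((k / g : ℕ) : ℂ) ^ r) =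
        Complex.exp (2 * Real.pi * Complex.I * (g ^ r * m : ℕ) * n / (k ^ r : ℕ)) := by
    intro g hg m
    rw [Nat.mem_divisors] at hg
    have hg0 : (g : ℂ) ≠ 0 := Nat.cast_ne_zero.2 (ne_zero_of_dvd_ne_zero hk hg.1)
    have hkg : ((k / g : ℕ) : ℂ) ≠ 0 := Nat.cast_ne_zero.2 <|
      (Nat.div_ne_zero_iff_of_dvd hg.1).2 ⟨hk, ne_zero_of_dvd_ne_zero hk hg.1⟩
    have hkeq : (k : ℂ) = g * (k / g : ℕ) := by exact_mod_cast (Nat.mul_div_cancel' hg.1).symm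
    congr 1
    push_cast
    rw [hkeq]
    field_simp
    ring
  simp only [ramcr_eq_sum_rCoprime hr]
  rw [sum_congr rfl fun g hg => sum_congr rfl fun m _ => hterm g hg m,
    sum_divisors_sum_rCoprime hk
      fun M => Complex.exp (2 * Real.pi * Complex.I * M * n / (k ^ r : ℕ)),
    sum_Icc_exp_eq_ite _ _ (pow_ne_zero r hk), Nat.cast_pow]

theorem stmt11_general (r n k : ℕ) (hr : 0 < r) (hk : 0 < k) :
    neckr r 1 n k = if k ^ r ∣ n then 1 else 0 := by
  have hkr : (k : ℂ) ^ r ≠ 0 := pow_ne_zero r (Nat.cast_ne_zero.2 hk.ne')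
  simp only [neckr, one_pow, mul_one, sum_divisors_ramcr_div hr.ne' hk.ne']
  split_ifs <;> simp [hkr]

theorem stmt11 (r n k : ℕ) (hr : 0 < r) (hn : 0 < n) (hk : 0 < k) :
    neckr r 1 n k = if k ^ r ∣ n then 1 else 0 :=
  stmt11_general r n k hr hk
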